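/- arXiv:1907.09918 — 4 statements merged into one kernel-verified Lean document; each statement's English description precedes it below -/
import Mathlib

section
/- Let Q ≥ 1 be an integer, let X be a Gamma(Q,1)-distributed real random variable and Y an Exp(1)-distributed real random variable, with X and Y independent. Then the law of X·Y is absolutely continuous with respect to Lebesgue measure, with density f(x) = (2/Γ(Q))·x^{(Q-1)/2}·K_{Q-1}(2√x) for x > 0 (and 0 for x ≤ 0). -/
open MeasureTheory ProbabilityTheory

/-- The modified Bessel function of the second kind, via its integral representation
`K_ν(x) = ∫₀^∞ exp(−x cosh t) cosh(ν t) dt`. -/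
noncomputable def besselK (ν x : ℝ) : ℝ :=
  ∫ t in Set.Ioi (0 : ℝ), Real.exp (-x * Real.cosh t) * Real.cosh (ν * t)

/-!
The law of `X * Y` is the multiplicative convolution of the two laws, whose density is
`h z = ∫ f x g (z / x) |x|⁻¹ dx`. For the Gamma and exponential densities and `z > 0` this is
`Γ(Q)⁻¹ ∫₀^∞ x ^ (Q - 2) exp (-x - z / x) dx`. The substitution `x = √z eᵗ` turns `x + z / x` into
`2 √z cosh t`, leaving `√z ^ (Q - 1) ∫ exp ((Q - 1) t) exp (-2 √z cosh t) dt` over all of `ℝ`;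
averaging the integrand with its reflection under `t ↦ -t` replaces `exp ((Q - 1) t)` by
`cosh ((Q - 1) t)`, and the even integrand gives `2 K_{Q-1}(2 √z)`.
-/

open Real Set
open scoped ENNReal

lemma sq_div_four_le_cosh (t : ℝ) : t ^ 2 / 4 ≤ cosh t := by
  have hquad := quadratic_le_exp_of_nonneg (abs_nonneg t)
  have hhalf : exp |t| / 2 ≤ cosh t := by
    rw [← cosh_abs, cosh_eq]
    linarith [exp_pos (-|t|)]
  nlinarith [abs_nonneg t, sq_abs t]

lemma exp_mul_mul_exp_neg_mul_cosh_le (ν : ℝ) {a : ℝ} (ha : 0 < a) (t : ℝ) :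
    exp (ν * t) * exp (-a * cosh t) ≤ exp (2 * ν ^ 2 / a) * exp (-(a / 8) * t ^ 2) := by
  have hamgm : ν * t ≤ 2 * ν ^ 2 / a + a / 8 * t ^ 2 := by
    have : 2 * ν ^ 2 / a + a / 8 * t ^ 2 - ν * t = (a * t - 4 * ν) ^ 2 / (8 * a) := by
      field_simp; ring
    nlinarith [show 0 ≤ (a * t - 4 * ν) ^ 2 / (8 * a) by positivity]
  rw [← exp_add, ← exp_add, exp_le_exp]
  nlinarith [sq_div_four_le_cosh t]

lemma integrable_exp_mul_mul_exp_neg_mul_cosh (ν : ℝ) {a : ℝ} (ha : 0 < a) :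
    Integrable fun t => exp (ν * t) * exp (-a * cosh t) := by
  refine ((integrable_exp_neg_mul_sq (by positivity : 0 < a / 8)).const_mul
    (exp (2 * ν ^ 2 / a))).mono' (by fun_prop) (ae_of_all _ fun t => ?_)
  rw [norm_of_nonneg (by positivity)]
  exact exp_mul_mul_exp_neg_mul_cosh_le ν ha t

lemma integral_exp_mul_mul_exp_neg_mul_cosh (ν : ℝ) {a : ℝ} (ha : 0 < a) :
    ∫ t, exp (ν * t) * exp (-a * cosh t) = 2 * besselK ν a := by
  have hneg : ∫ t, exp (-ν * t) * exp (-a * cosh t) = ∫ t, exp (ν * t) * exp (-a * cosh t) := by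
    rw [← integral_neg_eq_self]
    simp only [neg_mul_neg, cosh_neg]
  have hsum : (∫ t, exp (ν * t) * exp (-a * cosh t)) + ∫ t, exp (-ν * t) * exp (-a * cosh t) =
      2 * ∫ t, exp (-a * cosh t) * cosh (ν * t) := by
    rw [← integral_add (integrable_exp_mul_mul_exp_neg_mul_cosh ν ha)
      (integrable_exp_mul_mul_exp_neg_mul_cosh (-ν) ha), ← integral_const_mul]
    congr 1 with t
    rw [cosh_eq (ν * t), neg_mul ν t]
    ring
  have heven : ∫ t, exp (-a * cosh t) * cosh (ν * t) =
      ∫ t, exp (-a * cosh |t|) * cosh (ν * |t|) := by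
    congr 1 with t
    rw [cosh_abs, ← cosh_abs (ν * |t|), abs_mul, abs_abs, ← abs_mul, cosh_abs]
  rw [heven, integral_comp_abs (f := fun t => exp (-a * cosh t) * cosh (ν * t))] at hsum
  unfold besselK
  linarith

lemma mul_exp_mul_rpow_mul_exp_neg_mul_exp_neg_div {c : ℝ} (hc : 0 < c) (ν t : ℝ) :
    c * exp t * ((c * exp t) ^ (ν - 1) * exp (-(c * exp t)) * exp (-(c * c / (c * exp t)))) =
      c ^ ν * (exp (ν * t) * exp (-(2 * c) * cosh t)) := by
  have hdiv : c * c / (c * exp t) = c * exp (-t) := by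
    rw [exp_neg]; field_simp
  have hpow : (c * exp t) ^ (ν - 1) = c ^ (ν - 1) * exp ((ν - 1) * t) := by
    rw [mul_rpow hc.le (exp_pos t).le, ← exp_mul, mul_comm t]
  have hcpow : c * c ^ (ν - 1) = c ^ ν := by
    rw [rpow_sub_one hc.ne']; field_simp
  have hexp : exp t * exp ((ν - 1) * t) = exp (ν * t) := by
    rw [← exp_add]; ring_nf
  have hcosh : exp (-(c * exp t)) * exp (-(c * exp (-t))) = exp (-(2 * c) * cosh t) := by
    rw [← exp_add, cosh_eq]; ring_nf
  rw [hdiv, hpow]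
  linear_combination (exp t * exp ((ν - 1) * t) * exp (-(c * exp t)) * exp (-(c * exp (-t)))) *
    hcpow + c ^ ν * exp (-(c * exp t)) * exp (-(c * exp (-t))) * hexp +
    c ^ ν * exp (ν * t) * hcosh

lemma lintegral_rpow_mul_exp_neg_mul_exp_neg_div (ν : ℝ) {z : ℝ} (hz : 0 < z) :
    ∫⁻ x in Ioi 0, ENNReal.ofReal (x ^ (ν - 1) * exp (-x) * exp (-(z / x))) =
      ENNReal.ofReal (2 * z ^ (ν / 2) * besselK ν (2 * √z)) := by
  obtain ⟨c, hc, rfl⟩ : ∃ c, 0 < c ∧ c * c = z := ⟨√z, sqrt_pos.mpr hz, mul_self_sqrt hz.le⟩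
  have himage : (fun t => c * exp t) '' univ = Ioi 0 := by
    rw [← image_const_mul_Ioi_zero hc, ← range_exp, ← image_univ, image_image]
  rw [← himage, lintegral_image_eq_lintegral_abs_deriv_mul MeasurableSet.univ
      (fun t _ => ((hasDerivAt_exp t).const_mul c).hasDerivWithinAt)
      (fun s _ t _ hst => exp_injective (mul_left_cancel₀ hc.ne' hst)),
    Measure.restrict_univ]
  simp_rw [abs_of_pos (by positivity : 0 < c * exp _),
    ← ENNReal.ofReal_mul (by positivity : 0 ≤ c * exp _),
    mul_exp_mul_rpow_mul_exp_neg_mul_exp_neg_div hc]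
  rw [← ofReal_integral_eq_lintegral_ofReal
      ((integrable_exp_mul_mul_exp_neg_mul_cosh ν (by positivity)).const_mul _)
      (ae_of_all _ fun t => by positivity),
    integral_const_mul, integral_exp_mul_mul_exp_neg_mul_cosh ν (by positivity),
    sqrt_mul_self hc.le, mul_rpow hc.le hc.le, ← rpow_add hc, add_halves]
  congr 1
  ring

lemma lintegral_comp_mul_left (F : ℝ → ℝ≥0∞) {a : ℝ} (ha : a ≠ 0) :
    ∫⁻ y, F (a * y) = ENNReal.ofReal |a|⁻¹ * ∫⁻ z, F z := by
  rw [← abs_inv, ← smul_eq_mul, ← lintegral_smul_measure, ← Real.map_volume_mul_left ha,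
    (measurableEmbedding_mulLeft₀ ha).lintegral_map]

lemma withDensity_mconv_withDensity {f g : ℝ → ℝ≥0∞} (hf : Measurable f) (hg : Measurable g) :
    volume.withDensity f ∗ₘ volume.withDensity g =
      volume.withDensity fun z => ∫⁻ x, f x * g (z / x) * ENNReal.ofReal |x|⁻¹ := by
  ext s hs
  have hs1 : Measurable (s.indicator (1 : ℝ → ℝ≥0∞)) := measurable_one.indicator hs
  have hinner : ∀ x ≠ 0, ∫⁻ y, s.indicator 1 (x * y) ∂volume.withDensity g =
      ENNReal.ofReal |x|⁻¹ * ∫⁻ z, s.indicator 1 z * g (z / x) := by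
    intro x hx
    have hmeas : Measurable fun y => s.indicator (1 : ℝ → ℝ≥0∞) (x * y) :=
      hs1.comp (measurable_const_mul x)
    rw [lintegral_withDensity_eq_lintegral_mul _ hg hmeas, ← lintegral_comp_mul_left _ hx]
    simp only [Pi.mul_apply, mul_div_cancel_left₀ _ hx, mul_comm]
  calc (volume.withDensity f ∗ₘ volume.withDensity g) s
      = ∫⁻ x, f x * ∫⁻ y, s.indicator 1 (x * y) ∂volume.withDensity g := by
        rw [← lintegral_indicator_one hs, Measure.lintegral_mconv hs1,
          lintegral_withDensity_eq_lintegral_mul _ hf]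
        · rfl
        · exact (hs1.comp measurable_mul).lintegral_prod_right'
    _ = ∫⁻ x, ∫⁻ z, s.indicator 1 z * (f x * g (z / x) * ENNReal.ofReal |x|⁻¹) := by
        refine lintegral_congr_ae ?_
        filter_upwards [compl_mem_ae_iff.mpr (measure_singleton (0 : ℝ))] with x hx
        rw [hinner x hx, ← mul_assoc, ← lintegral_const_mul _ (by fun_prop)]
        congr 1 with z
        ring
    _ = ∫⁻ z, s.indicator 1 z * ∫⁻ x, f x * g (z / x) * ENNReal.ofReal |x|⁻¹ := by
        rw [lintegral_lintegral_swap (by fun_prop)]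
        congr 1 with z
        rw [lintegral_const_mul _ (by fun_prop)]
    _ = _ := by
        rw [withDensity_apply _ hs, ← lintegral_indicator hs]
        congr 1 with z
        simp [indicator]

lemma gammaPDF_mul_mul_ofReal_abs_inv_of_nonpos (a r : ℝ) (y : ℝ≥0∞) {x : ℝ} (hx : x ≤ 0) :
    gammaPDF a r x * y * ENNReal.ofReal |x|⁻¹ = 0 := by
  rcases hx.lt_or_eq with hx | rfl
  · rw [gammaPDF_of_neg hx, zero_mul, zero_mul]
  · simp -- `|0|⁻¹ = 0` in Lean

lemma lintegral_gammaPDF_mul_gammaPDF_one_div_of_neg (a : ℝ) {z : ℝ} (hz : z < 0) :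
    ∫⁻ x, gammaPDF a 1 x * gammaPDF 1 1 (z / x) * ENNReal.ofReal |x|⁻¹ = 0 := by
  refine (lintegral_congr fun x => ?_).trans lintegral_zero
  rcases le_or_gt x 0 with hx | hx
  · exact gammaPDF_mul_mul_ofReal_abs_inv_of_nonpos _ _ _ hx
  · simp [gammaPDF_of_neg (div_neg_of_neg_of_pos hz hx)]

lemma lintegral_gammaPDF_mul_gammaPDF_one_div_of_pos (a : ℝ) {z : ℝ} (hz : 0 < z) :
    ∫⁻ x, gammaPDF a 1 x * gammaPDF 1 1 (z / x) * ENNReal.ofReal |x|⁻¹ =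
      ENNReal.ofReal (2 / Gamma a * z ^ ((a - 1) / 2) * besselK (a - 1) (2 * √z)) := by
  have hsupp : (fun x => gammaPDF a 1 x * gammaPDF 1 1 (z / x) * ENNReal.ofReal |x|⁻¹).support ⊆
      Ioi 0 := fun x hx =>
    not_le.mp fun hx' => hx (gammaPDF_mul_mul_ofReal_abs_inv_of_nonpos _ _ _ hx')
  have hpoint : ∀ x ∈ Ioi (0 : ℝ), gammaPDF a 1 x * gammaPDF 1 1 (z / x) * ENNReal.ofReal |x|⁻¹ =
      ENNReal.ofReal (Gamma a)⁻¹ *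
        ENNReal.ofReal (x ^ (a - 1 - 1) * exp (-x) * exp (-(z / x))) := by
    intro x (hx : 0 < x)
    rw [gammaPDF_of_nonneg hx.le, gammaPDF_of_nonneg (by positivity), abs_of_pos hx,
      ← ENNReal.ofReal_mul' (by positivity), ← ENNReal.ofReal_mul' (by positivity),
      ← ENNReal.ofReal_mul' (by positivity)]
    congr 1
    simp only [rpow_sub_one hx.ne' (a - 1), one_rpow, Gamma_one, sub_self, rpow_zero, one_mul]
    ring
  have hK : 0 ≤ besselK (a - 1) (2 * √z) :=
    setIntegral_nonneg measurableSet_Ioi fun t _ => by positivity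
  rw [← setLIntegral_eq_of_support_subset hsupp, setLIntegral_congr_fun measurableSet_Ioi hpoint,
    lintegral_const_mul' _ _ ENNReal.ofReal_ne_top, lintegral_rpow_mul_exp_neg_mul_exp_neg_div _ hz,
    ← ENNReal.ofReal_mul' (by positivity)]
  congr 1
  ring

theorem stmt_5 (Q : ℕ) (hQ : 1 ≤ Q)
    {Ω : Type*} [MeasureSpace Ω] [IsProbabilityMeasure (ℙ : Measure Ω)]
    (X Y : Ω → ℝ)
    (hX : Measure.map X ℙ = gammaMeasure Q 1)
    (hY : Measure.map Y ℙ = expMeasure 1)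
    (hXY : IndepFun X Y) :
    Measure.map (fun ω => X ω * Y ω) ℙ =
      volume.withDensity (fun x =>
        ENNReal.ofReal
          (if 0 < x then
            (2 / Real.Gamma Q) * x ^ (((Q : ℝ) - 1) / 2) * besselK ((Q : ℝ) - 1) (2 * Real.sqrt x)
          else 0)) := by
  have hQpos : (0 : ℝ) < Q := by exact_mod_cast hQ
  have := isProbabilityMeasure_gammaMeasure hQpos one_pos
  have := isProbabilityMeasure_expMeasure one_pos
  have hXm : AEMeasurable X := .of_map_ne_zero (by rw [hX]; exact IsProbabilityMeasure.ne_zero _)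
  have hYm : AEMeasurable Y := .of_map_ne_zero (by rw [hY]; exact IsProbabilityMeasure.ne_zero _)
  rw [show (fun ω => X ω * Y ω) = X * Y from rfl, hXY.map_mul_eq_map_mconv_map₀ hXm hYm, hX, hY,
    expMeasure, gammaMeasure, gammaMeasure,
    withDensity_mconv_withDensity (f := gammaPDF Q 1) (g := gammaPDF 1 1)
      (measurable_gammaPDFReal _ _).ennreal_ofReal
      (measurable_gammaPDFReal _ _).ennreal_ofReal]
  -- at `z = 0` the convolution density may be infinite: the densities agree only a.e.
  refine withDensity_congr_ae ?_
  filter_upwards [compl_mem_ae_iff.mpr (measure_singleton (0 : ℝ))] with z (hz : z ≠ 0)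
  rcases hz.lt_or_gt with hneg | hpos
  · rw [if_neg hneg.not_gt, ENNReal.ofReal_zero,
      lintegral_gammaPDF_mul_gammaPDF_one_div_of_neg _ hneg]
  · rw [if_pos hpos, lintegral_gammaPDF_mul_gammaPDF_one_div_of_pos _ hpos]
end

section
/- Let N ≥ 1 be an integer and c > 0. Then lim_{ρ→∞} −ln( (1 − 2·√(c/ρ)·K₁(2·√(c/ρ)))^N ) / ln ρ = N. -/
open Filter

/-!
Writing `cosh t = sinh t + e^{-t}` in the integral for `K₁` and integrating the `sinh` part
exactly gives `1 - x K₁(x) = (1 - e^{-x} - x) + x G(x)`, where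
`G(x) = besselRemainder x = ∫₀^∞ e^{-t} (1 - e^{-x cosh t}) dt`. Cutting `G` at `T = -log x`,
where `x cosh t ≤ 1` on `[0, T]` and the tail is at most `e^{-T} = x`, shows
`G(x) ≍ x log (1/x)`, hence `1 - x K₁(x) ≍ x² log (1/x)` and `log (1 - x K₁(x)) / log x → 2`
as `x → 0⁺`. For `x = 2 √(c/ρ)` one has `log x / log ρ → -1/2`, and the `N`-th power
contributes the factor `N`.
-/

open MeasureTheory Set Real Topology

lemma tendsto_cosh_atTop : Tendsto cosh atTop atTop :=
  tendsto_atTop_mono (fun t => by rw [cosh_eq]; linarith [exp_pos (-t)])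
    (tendsto_exp_atTop.atTop_div_const two_pos)

section BesselIdentity

variable {x : ℝ}

lemma hasDerivAt_neg_exp_neg_mul_cosh_div (hx : x ≠ 0) (t : ℝ) :
    HasDerivAt (fun t => -exp (-x * cosh t) / x) (exp (-x * cosh t) * sinh t) t := by
  refine (((hasDerivAt_cosh t).const_mul (-x)).exp.fun_neg.div_const x).congr_deriv ?_
  field_simp

lemma tendsto_exp_neg_mul_cosh_atTop (hx : 0 < x) :
    Tendsto (fun t => exp (-x * cosh t)) atTop (𝓝 0) :=
  tendsto_exp_atBot.comp (tendsto_cosh_atTop.const_mul_atTop_of_neg (neg_neg_of_pos hx))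

lemma tendsto_neg_exp_neg_mul_cosh_div_atTop (hx : 0 < x) :
    Tendsto (fun t => -exp (-x * cosh t) / x) atTop (𝓝 0) := by
  simpa using ((tendsto_exp_neg_mul_cosh_atTop hx).neg.div_const x)

lemma exp_neg_mul_cosh_mul_sinh_nonneg {t : ℝ} (ht : 0 < t) :
    0 ≤ exp (-x * cosh t) * sinh t :=
  mul_nonneg (exp_nonneg _) (sinh_nonneg_iff.mpr ht.le)

lemma integrableOn_exp_neg_mul_cosh_mul_sinh (hx : 0 < x) :
    IntegrableOn (fun t => exp (-x * cosh t) * sinh t) (Ioi 0) :=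
  integrableOn_Ioi_deriv_of_nonneg' (fun t _ => hasDerivAt_neg_exp_neg_mul_cosh_div hx.ne' t)
    (fun _ => exp_neg_mul_cosh_mul_sinh_nonneg) (tendsto_neg_exp_neg_mul_cosh_div_atTop hx)

lemma integral_exp_neg_mul_cosh_mul_sinh (hx : 0 < x) :
    ∫ t in Ioi 0, exp (-x * cosh t) * sinh t = exp (-x) / x := by
  rw [integral_Ioi_of_hasDerivAt_of_nonneg'
    (fun t _ => hasDerivAt_neg_exp_neg_mul_cosh_div hx.ne' t)
    (fun _ => exp_neg_mul_cosh_mul_sinh_nonneg) (tendsto_neg_exp_neg_mul_cosh_div_atTop hx)]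
  simp [neg_div]

lemma exp_neg_mul_cosh_le_one (hx : 0 ≤ x) (t : ℝ) : exp (-x * cosh t) ≤ 1 :=
  exp_le_one_iff.mpr (by nlinarith [one_le_cosh t])

lemma integrableOn_exp_neg_mul_cosh_mul_exp_neg (hx : 0 ≤ x) :
    IntegrableOn (fun t => exp (-x * cosh t) * exp (-t)) (Ioi 0) := by
  refine Integrable.bdd_mul (c := 1) (integrableOn_exp_neg_Ioi 0) (by fun_prop)
    (ae_of_all _ fun t => ?_)
  rw [norm_of_nonneg (exp_nonneg _)]
  exact exp_neg_mul_cosh_le_one hx t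

lemma mul_besselK_one (hx : 0 < x) :
    x * besselK 1 x = exp (-x) + x * ∫ t in Ioi 0, exp (-x * cosh t) * exp (-t) := by
  have hsplit : besselK 1 x = (∫ t in Ioi 0, exp (-x * cosh t) * sinh t)
      + ∫ t in Ioi 0, exp (-x * cosh t) * exp (-t) := by
    rw [besselK, ← integral_add (integrableOn_exp_neg_mul_cosh_mul_sinh hx)
      (integrableOn_exp_neg_mul_cosh_mul_exp_neg hx.le)]
    refine setIntegral_congr_fun measurableSet_Ioi fun t _ => ?_
    rw [one_mul, ← mul_add, ← cosh_sub_sinh, add_sub_cancel]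
  rw [hsplit, integral_exp_neg_mul_cosh_mul_sinh hx]
  field_simp

end BesselIdentity

lemma exp_neg_le_one_sub_add_sq_div_two {y : ℝ} (hy : 0 ≤ y) : exp (-y) ≤ 1 - y + y ^ 2 / 2 := by
  have hprod : exp (-y) * exp y = 1 := by rw [← exp_add, neg_add_cancel, exp_zero]
  nlinarith [quadratic_le_exp_of_nonneg hy, exp_pos (-y), sq_nonneg (y ^ 2)]

lemma exp_neg_mul_cosh (t : ℝ) : exp (-t) * cosh t = (1 + exp (-(2 * t))) / 2 := by
  rw [cosh_eq, show -(2 * t) = -t + -t by ring, exp_add, exp_neg]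
  field_simp

lemma cosh_le_exp_of_nonneg {t : ℝ} (ht : 0 ≤ t) : cosh t ≤ exp t := by
  rw [cosh_eq]
  linarith [exp_le_exp.mpr (by linarith : -t ≤ t)]

noncomputable def besselRemainder (x : ℝ) : ℝ :=
  ∫ t in Ioi 0, exp (-t) * (1 - exp (-x * cosh t))

section BesselRemainder

variable {x : ℝ}

lemma integrableOn_besselRemainder_integrand (hx : 0 ≤ x) :
    IntegrableOn (fun t => exp (-t) * (1 - exp (-x * cosh t))) (Ioi 0) :=
  ((integrableOn_exp_neg_Ioi 0).sub (integrableOn_exp_neg_mul_cosh_mul_exp_neg hx)).congr_fun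
    (fun t _ => by simp only [Pi.sub_apply]; ring) measurableSet_Ioi

lemma one_sub_mul_besselK_one (hx : 0 < x) :
    1 - x * besselK 1 x = (1 - exp (-x) - x) + x * besselRemainder x := by
  have hG : besselRemainder x = (∫ t in Ioi 0, exp (-t))
      - ∫ t in Ioi 0, exp (-x * cosh t) * exp (-t) := by
    rw [besselRemainder, ← integral_sub (integrableOn_exp_neg_Ioi 0)
      (integrableOn_exp_neg_mul_cosh_mul_exp_neg hx.le)]
    exact setIntegral_congr_fun measurableSet_Ioi fun t _ => by ring
  rw [mul_besselK_one hx, hG, integral_exp_neg_Ioi_zero]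
  ring

variable {t : ℝ}

lemma besselRemainder_integrand_nonneg (hx : 0 ≤ x) :
    0 ≤ exp (-t) * (1 - exp (-x * cosh t)) :=
  mul_nonneg (exp_nonneg _) (sub_nonneg.mpr (exp_neg_mul_cosh_le_one hx t))

lemma besselRemainder_integrand_le_exp_neg :
    exp (-t) * (1 - exp (-x * cosh t)) ≤ exp (-t) := by
  nlinarith [exp_pos (-t), exp_pos (-x * cosh t)]

lemma besselRemainder_integrand_le (hx : 0 ≤ x) (ht : 0 ≤ t) :
    exp (-t) * (1 - exp (-x * cosh t)) ≤ x := by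
  have hlin : 1 - exp (-x * cosh t) ≤ x * cosh t := by
    rw [neg_mul]
    linarith [one_sub_le_exp_neg (x * cosh t)]
  have hcosh : exp (-t) * cosh t ≤ 1 := by
    rw [exp_neg_mul_cosh]
    linarith [exp_le_one_iff.mpr (by linarith : -(2 * t) ≤ 0)]
  calc exp (-t) * (1 - exp (-x * cosh t)) ≤ exp (-t) * (x * cosh t) := by gcongr
    _ = x * (exp (-t) * cosh t) := by ring
    _ ≤ x := mul_le_of_le_one_right hx hcosh

lemma div_four_le_besselRemainder_integrand (hx : 0 ≤ x) (ht : 0 ≤ t) (hxt : x * exp t ≤ 1) :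
    x / 4 ≤ exp (-t) * (1 - exp (-x * cosh t)) := by
  set y := x * cosh t
  have hy0 : 0 ≤ y := mul_nonneg hx (cosh_pos t).le
  have hy1 : y ≤ 1 := (mul_le_mul_of_nonneg_left (cosh_le_exp_of_nonneg ht) hx).trans hxt
  have hquad : y / 2 ≤ 1 - exp (-x * cosh t) := by
    rw [neg_mul]
    nlinarith [exp_neg_le_one_sub_add_sq_div_two hy0]
  have hcosh : 1 / 2 ≤ exp (-t) * cosh t := by
    rw [exp_neg_mul_cosh]
    linarith [exp_pos (-(2 * t))]
  calc x / 4 = x * (1 / 2) / 2 := by ring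
    _ ≤ x * (exp (-t) * cosh t) / 2 := by gcongr
    _ = exp (-t) * (y / 2) := by ring
    _ ≤ exp (-t) * (1 - exp (-x * cosh t)) := by gcongr

end BesselRemainder

section BesselRemainderBounds

variable {x T : ℝ}

lemma intervalIntegrable_besselRemainder_integrand (x a b : ℝ) :
    IntervalIntegrable (fun t => exp (-t) * (1 - exp (-x * cosh t))) volume a b :=
  (by fun_prop : Continuous fun t => exp (-t) * (1 - exp (-x * cosh t))).intervalIntegrable a b

lemma besselRemainder_eq_intervalIntegral_add (hx : 0 ≤ x) (hT : 0 ≤ T) :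
    besselRemainder x = (∫ t in 0..T, exp (-t) * (1 - exp (-x * cosh t)))
      + ∫ t in Ioi T, exp (-t) * (1 - exp (-x * cosh t)) :=
  (intervalIntegral.integral_interval_add_Ioi (integrableOn_besselRemainder_integrand hx)
    ((integrableOn_besselRemainder_integrand hx).mono_set (Ioi_subset_Ioi hT))).symm

lemma mul_div_four_le_besselRemainder (hx : 0 ≤ x) (hT : 0 ≤ T) (hxT : x * exp T ≤ 1) :
    x * T / 4 ≤ besselRemainder x := by
  have hhead : x * T / 4 ≤ ∫ t in 0..T, exp (-t) * (1 - exp (-x * cosh t)) :=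
    calc x * T / 4 = ∫ _ in 0..T, x / 4 := by simp; ring
      _ ≤ _ := intervalIntegral.integral_mono_on hT intervalIntegrable_const
        (intervalIntegrable_besselRemainder_integrand x 0 T) fun t ht =>
          div_four_le_besselRemainder_integrand hx ht.1
            ((mul_le_mul_of_nonneg_left (exp_le_exp.mpr ht.2) hx).trans hxT)
  have htail : 0 ≤ ∫ t in Ioi T, exp (-t) * (1 - exp (-x * cosh t)) :=
    setIntegral_nonneg measurableSet_Ioi fun _ _ => besselRemainder_integrand_nonneg hx
  rw [besselRemainder_eq_intervalIntegral_add hx hT]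
  linarith

lemma besselRemainder_le (hx : 0 ≤ x) (hT : 0 ≤ T) : besselRemainder x ≤ x * T + exp (-T) := by
  have hhead : ∫ t in 0..T, exp (-t) * (1 - exp (-x * cosh t)) ≤ x * T :=
    calc _ ≤ ∫ _ in 0..T, x := intervalIntegral.integral_mono_on hT
          (intervalIntegrable_besselRemainder_integrand x 0 T) intervalIntegrable_const
          fun t ht => besselRemainder_integrand_le hx ht.1
      _ = x * T := by simp; ring
  have htail : ∫ t in Ioi T, exp (-t) * (1 - exp (-x * cosh t)) ≤ exp (-T) := by
    rw [← integral_exp_neg_Ioi]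
    exact setIntegral_mono_on
      ((integrableOn_besselRemainder_integrand hx).mono_set (Ioi_subset_Ioi hT))
      (integrableOn_exp_neg_Ioi T) measurableSet_Ioi fun _ _ => besselRemainder_integrand_le_exp_neg
  rw [besselRemainder_eq_intervalIntegral_add hx hT]
  linarith

end BesselRemainderBounds

section SmallArgument

variable {x : ℝ}

lemma sq_mul_neg_log_div_eight_le_one_sub_mul_besselK_one (hx : 0 < x) (hlog : 8 ≤ -log x) :
    x ^ 2 * -log x / 8 ≤ 1 - x * besselK 1 x := by
  have hG := mul_div_four_le_besselRemainder hx.le (by linarith : 0 ≤ -log x)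
    (by rw [exp_neg, exp_log hx, mul_inv_cancel₀ hx.ne'])
  have hexp := exp_neg_le_one_sub_add_sq_div_two hx.le
  rw [one_sub_mul_besselK_one hx]
  nlinarith [mul_le_mul_of_nonneg_left hG hx.le]

lemma one_sub_mul_besselK_one_le_two_mul_sq_mul_neg_log (hx : 0 < x) (hlog : 1 ≤ -log x) :
    1 - x * besselK 1 x ≤ 2 * (x ^ 2 * -log x) := by
  have hG := besselRemainder_le hx.le (by linarith : 0 ≤ -log x)
  rw [neg_neg, exp_log hx] at hG
  rw [one_sub_mul_besselK_one hx]
  nlinarith [mul_le_mul_of_nonneg_left hG hx.le, one_sub_le_exp_neg x]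

end SmallArgument

lemma tendsto_log_add_const_div_atTop (k : ℝ) :
    Tendsto (fun L => (log L + k) / L) atTop (𝓝 0) := by
  simpa [add_div] using isLittleO_log_id_atTop.tendsto_div_nhds_zero.add
    (tendsto_const_nhds.div_atTop tendsto_id : Tendsto (fun L : ℝ => k / L) atTop (𝓝 0))

lemma log_one_sub_mul_besselK_one_mem_Icc {x : ℝ} (hx : 0 < x) (hlog : 8 ≤ -log x) :
    log (1 - x * besselK 1 x) ∈
      Icc (2 * log x + log (-log x) - log 8) (2 * log x + log (-log x) + log 2) := by
  have hlower := sq_mul_neg_log_div_eight_le_one_sub_mul_besselK_one hx hlog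
  have hupper := one_sub_mul_besselK_one_le_two_mul_sq_mul_neg_log hx (by linarith)
  have hpos : 0 < x ^ 2 * -log x / 8 := by positivity
  constructor
  · have := log_le_log hpos hlower
    rwa [log_div (by positivity) (by norm_num), log_mul (by positivity) (by positivity),
      log_pow] at this
  · have := log_le_log (hpos.trans_le hlower) hupper
    rw [log_mul (by norm_num) (by positivity), log_mul (by positivity) (by positivity),
      log_pow] at this
    push_cast at this
    linarith

lemma tendsto_log_one_sub_mul_besselK_one_div_log :
    Tendsto (fun x => log (1 - x * besselK 1 x) / log x) (𝓝[>] 0) (𝓝 2) := by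
  have hL : Tendsto (fun x => -log x) (𝓝[>] 0) atTop :=
    tendsto_neg_atBot_atTop.comp tendsto_log_nhdsGT_zero
  have hbound (k : ℝ) : Tendsto (fun x => 2 - (log (-log x) + k) / -log x) (𝓝[>] 0) (𝓝 2) := by
    simpa using ((tendsto_log_add_const_div_atTop k).comp hL).const_sub 2
  refine tendsto_of_tendsto_of_tendsto_of_le_of_le' (hbound (log 2)) (hbound (-log 8)) ?_ ?_
  all_goals
    filter_upwards [self_mem_nhdsWithin, hL.eventually_ge_atTop 8] with x hx hlog
    obtain ⟨hlower, hupper⟩ := log_one_sub_mul_besselK_one_mem_Icc hx hlog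
    have hmul (k : ℝ) :
        (2 - (log (-log x) + k) / -log x) * log x = 2 * log x + log (-log x) + k := by
      have : log x ≠ 0 := by linarith
      field_simp
      ring
  · rw [le_div_iff_of_neg (by linarith), hmul]
    linarith
  · rw [div_le_iff_of_neg (by linarith), hmul]
    linarith

section TransmitSNR

variable {c : ℝ}

lemma tendsto_two_mul_sqrt_div_atTop_nhdsGT_zero (hc : 0 < c) :
    Tendsto (fun ρ : ℝ => 2 * √(c / ρ)) atTop (𝓝[>] 0) := by
  refine tendsto_nhdsWithin_iff.mpr ⟨?_, ?_⟩
  · simpa using ((continuous_sqrt.tendsto 0).comp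
      (tendsto_const_nhds.div_atTop tendsto_id)).const_mul 2
  · filter_upwards [eventually_gt_atTop 0] with ρ hρ
    exact mul_pos two_pos (sqrt_pos.mpr (div_pos hc hρ))

lemma tendsto_neg_log_two_mul_sqrt_div_div_log (hc : 0 < c) :
    Tendsto (fun ρ => -log (2 * √(c / ρ)) / log ρ) atTop (𝓝 (1 / 2)) := by
  have h : Tendsto (fun ρ => 1 / 2 - (log 2 + log c / 2) / log ρ) atTop (𝓝 (1 / 2 - 0)) :=
    tendsto_const_nhds.sub (tendsto_const_nhds.div_atTop tendsto_log_atTop)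
  rw [sub_zero] at h
  refine h.congr' ?_
  filter_upwards [eventually_gt_atTop 1] with ρ hρ
  have : log ρ ≠ 0 := (log_pos hρ).ne'
  rw [log_mul two_ne_zero (by positivity), log_sqrt (by positivity),
    log_div hc.ne' (by positivity)]
  field_simp
  ring

end TransmitSNR

theorem stmt_12_general (N : ℕ) (c : ℝ) (hc : 0 < c) :
    Tendsto
      (fun ρ : ℝ =>
        -Real.log ((1 - 2 * Real.sqrt (c / ρ) * besselK 1 (2 * Real.sqrt (c / ρ))) ^ N) /
          Real.log ρ)
      atTop (nhds N) := by
  have hx := tendsto_two_mul_sqrt_div_atTop_nhdsGT_zero hc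
  have hlim := ((tendsto_log_one_sub_mul_besselK_one_div_log.comp hx).mul
    (tendsto_neg_log_two_mul_sqrt_div_div_log hc)).const_mul (N : ℝ)
  rw [show (N : ℝ) * (2 * (1 / 2)) = N by ring] at hlim
  refine hlim.congr' ?_
  filter_upwards [hx (Ioo_mem_nhdsGT one_pos)] with ρ hρ
  have : log (2 * √(c / ρ)) ≠ 0 := (log_neg hρ.1 hρ.2).ne
  simp only [Function.comp_apply, log_pow]
  field_simp

theorem stmt_12 (N : ℕ) (hN : 1 ≤ N) (c : ℝ) (hc : 0 < c) :
    Tendsto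
      (fun ρ : ℝ =>
        -Real.log ((1 - 2 * Real.sqrt (c / ρ) * besselK 1 (2 * Real.sqrt (c / ρ))) ^ N) /
          Real.log ρ)
      atTop (nhds N) :=
  stmt_12_general N c hc
end

section
/- Let P ≥ 1 and Q ≥ 2 be integers and c > 0. Then lim_{ρ→∞} −ln( (1 − (2/Γ(Q))·(c/ρ)^{Q/2}·K_Q(2·√(c/ρ)))^P ) / ln ρ = P. -/
open Filter

/-!
The substitution `s = √ξ · eᵗ` gives `∫₀^∞ s^(ν-1) e^(-s-ξ/s) ds = 2 ξ^(ν/2) K_ν(2√ξ)`, so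
`F(ξ) = 1 - (2/Γ(ν)) ξ^(ν/2) K_ν(2√ξ) = Γ(ν)⁻¹ ∫₀^∞ e^(-s) s^(ν-1) (1 - e^(-ξ/s)) ds`
is the distribution function at `ξ` of `XY` with `X ~ Gamma(ν, 1)` and `Y ~ Exp(1)` independent.
Since `(1 - e⁻¹) u ≤ 1 - e^(-u) ≤ u` for `0 ≤ u ≤ 1`, for `ν > 1` and small `ξ` the value `F(ξ)` lies
between two positive multiples of `ξ` (the upper one is `Γ(ν-1)/Γ(ν) = 1/(ν-1)`). Hence
`-ln F(c/ρ)^P = P ln ρ + O(1)`.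
-/

open MeasureTheory Real Set

theorem two_mul_besselK_eq_integral {ν x : ℝ}
    (h : Integrable fun t : ℝ => exp (ν * t) * exp (-x * cosh t)) :
    2 * besselK ν x = ∫ t, exp (ν * t) * exp (-x * cosh t) := by
  have h_neg : Integrable fun t : ℝ => exp (-(ν * t)) * exp (-x * cosh t) := by
    simpa only [mul_neg, cosh_neg] using h.comp_neg
  have h_reflect : ∫ t, exp (-(ν * t)) * exp (-x * cosh t) = ∫ t, exp (ν * t) * exp (-x * cosh t) := by
    simpa only [mul_neg, cosh_neg] using
      integral_neg_eq_self (fun t => exp (ν * t) * exp (-x * cosh t)) volume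
  have h_even : ∀ t, exp (-x * cosh |t|) * cosh (ν * |t|) = exp (-x * cosh t) * cosh (ν * t) := by
    intro t
    rcases abs_choice t with ht | ht <;> simp [ht, cosh_neg]
  calc 2 * besselK ν x = ∫ t, exp (-x * cosh t) * cosh (ν * t) := by
        rw [besselK, ← integral_comp_abs]
        simp only [h_even]
    _ = ((∫ t, exp (ν * t) * exp (-x * cosh t)) + ∫ t, exp (-(ν * t)) * exp (-x * cosh t)) / 2 := by
        rw [← integral_add h h_neg, ← integral_div]
        congr 1 with t
        rw [cosh_eq (ν * t)]
        ring
    _ = ∫ t, exp (ν * t) * exp (-x * cosh t) := by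
        rw [h_reflect]
        ring

theorem integrableOn_exp_neg_sub_div_mul_rpow {ν ξ : ℝ} (hν : 0 < ν) (hξ : 0 ≤ ξ) :
    IntegrableOn (fun s => exp (-s - ξ / s) * s ^ (ν - 1)) (Ioi 0) := by
  refine (GammaIntegral_convergent hν).mono' ?_ ?_
  · have hcont : ContinuousOn (fun s => exp (-s - ξ / s) * s ^ (ν - 1)) (Ioi 0) := by
      intro s hs
      have : s ≠ 0 := (mem_Ioi.mp hs).ne'
      have hexp : ContinuousAt (fun s => exp (-s - ξ / s)) s := by fun_prop (disch := assumption)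
      exact (hexp.mul (continuousAt_rpow_const s _ (Or.inl this))).continuousWithinAt
    exact hcont.aestronglyMeasurable measurableSet_Ioi
  · refine (ae_restrict_iff' measurableSet_Ioi).mpr (ae_of_all _ fun s (hs : 0 < s) => ?_)
    rw [norm_of_nonneg (by positivity)]
    gcongr
    have : 0 ≤ ξ / s := by positivity
    linarith

section ExpSubstitution

variable {E : Type*} [NormedAddCommGroup E] [NormedSpace ℝ E] {r : ℝ}

theorem image_univ_const_mul_exp (hr : 0 < r) : (fun t => r * exp t) '' univ = Ioi 0 := by
  rw [image_univ]
  ext s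
  refine ⟨?_, fun (hs : 0 < s) => ⟨log (s / r), ?_⟩⟩
  · rintro ⟨t, rfl⟩
    exact mul_pos hr (exp_pos t)
  · show r * exp (log (s / r)) = s
    rw [exp_log (div_pos hs hr)]
    field_simp

theorem hasDerivWithinAt_const_mul_exp (r : ℝ) :
    ∀ t ∈ univ, HasDerivWithinAt (fun t => r * exp t) (r * exp t) univ t :=
  fun t _ => ((hasDerivAt_exp t).const_mul r).hasDerivWithinAt

theorem injOn_const_mul_exp (hr : 0 < r) : InjOn (fun t => r * exp t) univ :=
  fun _ _ _ _ h => exp_injective (mul_left_cancel₀ hr.ne' h)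

theorem integral_Ioi_zero_eq_integral_const_mul_exp (hr : 0 < r) (g : ℝ → E) :
    ∫ s in Ioi 0, g s = ∫ t, (r * exp t) • g (r * exp t) := by
  rw [← image_univ_const_mul_exp hr, integral_image_eq_integral_abs_deriv_smul MeasurableSet.univ
    (hasDerivWithinAt_const_mul_exp r) (injOn_const_mul_exp hr), setIntegral_univ]
  simp only [abs_of_pos (mul_pos hr (exp_pos _))]

theorem integrableOn_Ioi_zero_iff_integrable_const_mul_exp (hr : 0 < r) (g : ℝ → E) :
    IntegrableOn g (Ioi 0) ↔ Integrable fun t => (r * exp t) • g (r * exp t) := by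
  rw [← image_univ_const_mul_exp hr, integrableOn_image_iff_integrableOn_abs_deriv_smul
    MeasurableSet.univ (hasDerivWithinAt_const_mul_exp r) (injOn_const_mul_exp hr), integrableOn_univ]
  simp only [abs_of_pos (mul_pos hr (exp_pos _))]

end ExpSubstitution

theorem integral_exp_neg_sub_div_mul_rpow {ν ξ : ℝ} (hν : 0 < ν) (hξ : 0 < ξ) :
    ∫ s in Ioi 0, exp (-s - ξ / s) * s ^ (ν - 1) = 2 * ξ ^ (ν / 2) * besselK ν (2 * √ξ) := by
  set r := √ξ
  have hr : 0 < r := sqrt_pos.mpr hξ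
  have hrξ : r ^ 2 = ξ := sq_sqrt hξ.le
  have h_subst : ∀ t, (r * exp t) • (exp (-(r * exp t) - ξ / (r * exp t)) * (r * exp t) ^ (ν - 1))
      = r ^ ν * (exp (ν * t) * exp (-(2 * r) * cosh t)) := by
    intro t
    have hpos : 0 < r * exp t := by positivity
    have h_exponent : -(r * exp t) - ξ / (r * exp t) = -(2 * r) * cosh t := by
      rw [← hrξ, cosh_eq, exp_neg]
      field_simp
      ring
    rw [smul_eq_mul, h_exponent, rpow_sub_one hpos.ne', mul_rpow hr.le (exp_pos t).le, ← exp_mul,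
      mul_comm t ν]
    field_simp
  have hF : Integrable fun t => exp (ν * t) * exp (-(2 * r) * cosh t) := by
    have hG := (integrableOn_Ioi_zero_iff_integrable_const_mul_exp hr _).mp
      (integrableOn_exp_neg_sub_div_mul_rpow hν hξ.le)
    simp only [h_subst] at hG
    exact (integrable_const_mul_iff (isUnit_iff_ne_zero.mpr (rpow_pos_of_pos hr ν).ne') _).mp hG
  rw [integral_Ioi_zero_eq_integral_const_mul_exp hr]
  simp only [h_subst]
  rw [integral_const_mul, ← two_mul_besselK_eq_integral hF, ← hrξ, ← rpow_natCast, ← rpow_mul hr.le]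
  push_cast
  ring_nf

noncomputable def gammaExpProductCDF (ν ξ : ℝ) : ℝ :=
  1 - 2 / Gamma ν * ξ ^ (ν / 2) * besselK ν (2 * √ξ)

theorem exp_neg_mul_rpow_mul_one_sub_exp_neg (ν ξ s : ℝ) :
    exp (-s) * s ^ (ν - 1) * (1 - exp (-(ξ / s)))
      = exp (-s) * s ^ (ν - 1) - exp (-s - ξ / s) * s ^ (ν - 1) := by
  rw [sub_eq_add_neg (-s), exp_add]
  ring

theorem integrableOn_exp_neg_mul_rpow_mul_one_sub_exp_neg {ν ξ : ℝ} (hν : 0 < ν) (hξ : 0 ≤ ξ) :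
    IntegrableOn (fun s => exp (-s) * s ^ (ν - 1) * (1 - exp (-(ξ / s)))) (Ioi 0) := by
  simp only [exp_neg_mul_rpow_mul_one_sub_exp_neg]
  exact (GammaIntegral_convergent hν).sub (integrableOn_exp_neg_sub_div_mul_rpow hν hξ)

theorem gammaExpProductCDF_eq_integral_div {ν ξ : ℝ} (hν : 0 < ν) (hξ : 0 < ξ) :
    gammaExpProductCDF ν ξ
      = (∫ s in Ioi 0, exp (-s) * s ^ (ν - 1) * (1 - exp (-(ξ / s)))) / Gamma ν := by
  have hΓ : Gamma ν ≠ 0 := (Gamma_pos_of_pos hν).ne'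
  simp only [exp_neg_mul_rpow_mul_one_sub_exp_neg]
  rw [integral_sub (GammaIntegral_convergent hν) (integrableOn_exp_neg_sub_div_mul_rpow hν hξ.le),
    ← Gamma_eq_integral hν, integral_exp_neg_sub_div_mul_rpow hν hξ, gammaExpProductCDF]
  field_simp

theorem gammaExpProductCDF_le {ν ξ : ℝ} (hν : 1 < ν) (hξ : 0 < ξ) :
    gammaExpProductCDF ν ξ ≤ ξ / (ν - 1) := by
  have hν₀ : 0 < ν := by linarith
  have hΓ : 0 < Gamma (ν - 1) := Gamma_pos_of_pos (by linarith)
  have h_gamma : Gamma ν = (ν - 1) * Gamma (ν - 1) := by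
    rw [← Gamma_add_one (by linarith : ν - 1 ≠ 0), sub_add_cancel]
  have h_int : ∫ s in Ioi 0, exp (-s) * s ^ (ν - 1) * (1 - exp (-(ξ / s)))
      ≤ ξ * Gamma (ν - 1) := by
    rw [Gamma_eq_integral (by linarith), ← integral_const_mul]
    refine setIntegral_mono_on (integrableOn_exp_neg_mul_rpow_mul_one_sub_exp_neg hν₀ hξ.le)
      ((GammaIntegral_convergent (by linarith)).const_mul ξ) measurableSet_Ioi
      fun s (hs : 0 < s) => ?_
    calc exp (-s) * s ^ (ν - 1) * (1 - exp (-(ξ / s)))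
        ≤ exp (-s) * s ^ (ν - 1) * (ξ / s) := by
          gcongr
          linarith [add_one_le_exp (-(ξ / s))]
      _ = ξ * (exp (-s) * s ^ (ν - 1 - 1)) := by
          rw [rpow_sub_one hs.ne' (ν - 1)]
          field_simp
  calc gammaExpProductCDF ν ξ
      = (∫ s in Ioi 0, exp (-s) * s ^ (ν - 1) * (1 - exp (-(ξ / s)))) / Gamma ν :=
        gammaExpProductCDF_eq_integral_div hν₀ hξ
    _ ≤ ξ * Gamma (ν - 1) / ((ν - 1) * Gamma (ν - 1)) := by
        rw [h_gamma]
        gcongr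
    _ = ξ / (ν - 1) := by field_simp

theorem mul_one_sub_exp_neg_one_le_one_sub_exp_neg {u : ℝ} (hu₀ : 0 ≤ u) (hu₁ : u ≤ 1) :
    (1 - exp (-1)) * u ≤ 1 - exp (-u) := by
  have h := convexOn_exp.2 (mem_univ 0) (mem_univ (-1)) (by linarith : 0 ≤ 1 - u) hu₀ (by ring)
  simp only [smul_eq_mul, mul_zero, mul_neg, mul_one, zero_add, exp_zero] at h
  linarith

theorem mul_le_gammaExpProductCDF {ν ξ : ℝ} (hν : 1 ≤ ν) (hξ : 0 < ξ) (hξ₁ : ξ ≤ 1) :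
    exp (-2) * (1 - exp (-1)) / (2 * Gamma ν) * ξ ≤ gammaExpProductCDF ν ξ := by
  have hν₀ : 0 < ν := by linarith
  have h_int := integrableOn_exp_neg_mul_rpow_mul_one_sub_exp_neg hν₀ hξ.le
  have h_nonneg : ∀ s ∈ Ioi (0 : ℝ), 0 ≤ exp (-s) * s ^ (ν - 1) * (1 - exp (-(ξ / s))) := by
    intro s (hs : 0 < s)
    have : exp (-(ξ / s)) ≤ 1 := exp_le_one_iff.mpr (by simp only [neg_nonpos]; positivity)
    have : 0 ≤ 1 - exp (-(ξ / s)) := by linarith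
    positivity
  have h_pointwise : ∀ s ∈ Ioo (1 : ℝ) 2, exp (-2) * (1 - exp (-1)) / 2 * ξ
      ≤ exp (-s) * s ^ (ν - 1) * (1 - exp (-(ξ / s))) := by
    rintro s ⟨hs₁, hs₂⟩
    have hs₀ : 0 < s := one_pos.trans hs₁
    have h_chord := mul_one_sub_exp_neg_one_le_one_sub_exp_neg (u := ξ / s) (by positivity)
      ((div_le_one hs₀).mpr (by linarith))
    have h_exp : 0 < 1 - exp (-1) := sub_pos.mpr (exp_lt_one_iff.mpr (by norm_num))
    calc exp (-2) * (1 - exp (-1)) / 2 * ξ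
        = exp (-2) * 1 * ((1 - exp (-1)) * (ξ / 2)) := by ring
      _ ≤ exp (-s) * s ^ (ν - 1) * ((1 - exp (-1)) * (ξ / s)) := by
          gcongr
          exact one_le_rpow hs₁.le (by linarith)
      _ ≤ exp (-s) * s ^ (ν - 1) * (1 - exp (-(ξ / s))) := by gcongr
  calc exp (-2) * (1 - exp (-1)) / (2 * Gamma ν) * ξ
      = (∫ _ in Ioo (1 : ℝ) 2, exp (-2) * (1 - exp (-1)) / 2 * ξ) / Gamma ν := by
        rw [setIntegral_const, volume_real_Ioo]
        norm_num
        ring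
    _ ≤ (∫ s in Ioo 1 2, exp (-s) * s ^ (ν - 1) * (1 - exp (-(ξ / s)))) / Gamma ν := by
        gcongr ?_ / _
        exact setIntegral_mono_on (integrableOn_const (by simp))
          (h_int.mono_set fun s hs => one_pos.trans hs.1) measurableSet_Ioo h_pointwise
    _ ≤ (∫ s in Ioi 0, exp (-s) * s ^ (ν - 1) * (1 - exp (-(ξ / s)))) / Gamma ν := by
        gcongr ?_ / _
        exact setIntegral_mono_set h_int
          ((ae_restrict_iff' measurableSet_Ioi).mpr (ae_of_all _ h_nonneg))
          (Ioo_subset_Ioi_self.trans (Ioi_subset_Ioi zero_le_one)).eventuallyLE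
    _ = gammaExpProductCDF ν ξ := (gammaExpProductCDF_eq_integral_div hν₀ hξ).symm

theorem tendsto_neg_log_div_log_of_le_of_le {f : ℝ → ℝ} {A B : ℝ} (hA : 0 < A)
    (h : ∀ᶠ ρ in atTop, A / ρ ≤ f ρ ∧ f ρ ≤ B / ρ) :
    Tendsto (fun ρ => -log (f ρ) / log ρ) atTop (nhds 1) := by
  have h_lim : ∀ C : ℝ, Tendsto (fun ρ => 1 - C / log ρ) atTop (nhds 1) := fun C => by
    simpa using (tendsto_const_nhds.div_atTop tendsto_log_atTop).const_sub (1 : ℝ)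
  refine tendsto_of_tendsto_of_tendsto_of_le_of_le' (h_lim (log B)) (h_lim (log A)) ?_ ?_
  all_goals
    filter_upwards [h, eventually_gt_atTop 1] with ρ ⟨h_lo, h_hi⟩ hρ
    have hρ₀ : 0 < ρ := one_pos.trans hρ
    have h_log : 0 < log ρ := log_pos hρ
    have hf : 0 < f ρ := (div_pos hA hρ₀).trans_le h_lo
    have hB : 0 < B := (div_pos_iff_of_pos_right hρ₀).mp (hf.trans_le h_hi)
    rw [one_sub_div h_log.ne']
    gcongr ?_ / _
  · have := log_le_log hf h_hi
    rw [log_div hB.ne' hρ₀.ne'] at this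
    linarith
  · have := log_le_log (div_pos hA hρ₀) h_lo
    rw [log_div hA.ne' hρ₀.ne'] at this
    linarith

theorem stmt_13_general (P Q : ℕ) (hQ : 2 ≤ Q) (c : ℝ) (hc : 0 < c) :
    Tendsto
      (fun ρ : ℝ =>
        -Real.log
            ((1 - (2 / Real.Gamma Q) * (c / ρ) ^ ((Q : ℝ) / 2) *
              besselK Q (2 * Real.sqrt (c / ρ))) ^ P) /
          Real.log ρ)
      atTop (nhds P) := by
  have hQ₁ : (1 : ℝ) < Q := by exact_mod_cast hQ
  have h_exp : 0 < 1 - exp (-1) := sub_pos.mpr (exp_lt_one_iff.mpr (by norm_num))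
  have h_bounds : ∀ᶠ ρ in atTop,
      exp (-2) * (1 - exp (-1)) / (2 * Gamma Q) * c / ρ ≤ gammaExpProductCDF Q (c / ρ) ∧
        gammaExpProductCDF Q (c / ρ) ≤ c / (Q - 1) / ρ := by
    filter_upwards [eventually_ge_atTop c] with ρ hρ
    have hρ₀ : 0 < ρ := hc.trans_le hρ
    rw [mul_div_assoc, div_right_comm]
    exact ⟨mul_le_gammaExpProductCDF hQ₁.le (div_pos hc hρ₀) ((div_le_one hρ₀).mpr hρ),
      gammaExpProductCDF_le hQ₁ (div_pos hc hρ₀)⟩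
  have h_lim := (tendsto_neg_log_div_log_of_le_of_le
    (by have := Gamma_pos_of_pos (zero_lt_one.trans hQ₁); positivity) h_bounds).const_mul (P : ℝ)
  rw [mul_one] at h_lim
  refine h_lim.congr fun ρ => ?_
  rw [gammaExpProductCDF, log_pow]
  ring

theorem stmt_13 (P Q : ℕ) (hP : 1 ≤ P) (hQ : 2 ≤ Q) (c : ℝ) (hc : 0 < c) :
    Tendsto
      (fun ρ : ℝ =>
        -Real.log
            ((1 - (2 / Real.Gamma Q) * (c / ρ) ^ ((Q : ℝ) / 2) *
              besselK Q (2 * Real.sqrt (c / ρ))) ^ P) /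
          Real.log ρ)
      atTop (nhds P) :=
  stmt_13_general P Q hQ c hc
end

section
/- Let K ≥ 2 be an integer, ε > 0, ρ > 0 and τ > 0. Then ∫₀^∞ ∫₀^∞ (1 − exp( −(ε·x·z + ε/ρ)/(x·τ) ))·e^{−x}·z^{K−2}·e^{−z}/(K−2)! dx dz = 1 − 2·√(ε/(ρτ))·K₁(2·√(ε/(ρτ))) / (1 + ε/τ)^{K−1}. -/
/-!
With `c = ε / (ρ τ)` the exponent is `-(ε/τ) z - c/x`, so the inner integral is
`1 - e^{-(ε/τ) z} ∫₀^∞ e^{-x - c/x} dx`. The substitution `x = √c eᵗ` turns `e^{-x - c/x} dx`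
into `√c eᵗ e^{-2√c cosh t} dt` on all of `ℝ`, and folding `t ↦ -t` onto `(0, ∞)` replaces `eᵗ`
by `2 cosh t`, so `∫₀^∞ e^{-x - c/x} dx = 2√c K₁(2√c)`. The outer integral is then a difference
of the Gamma integrals `∫₀^∞ z^{K-2} e^{-r z} dz = (K-2)! / r^{K-1}` at `r = 1` and `r = 1 + ε/τ`.
-/

open MeasureTheory Set Real

theorem integral_eq_integral_Ioi_add_comp_neg {E : Type*} [NormedAddCommGroup E]
    [NormedSpace ℝ E] {f : ℝ → E} (hf : Integrable f) :
    ∫ t, f t = ∫ t in Ioi 0, (f t + f (-t)) := by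
  rw [integral_add hf.integrableOn hf.comp_neg.integrableOn, integral_comp_neg_Ioi, neg_zero,
    ← integral_add_compl measurableSet_Ioi hf, compl_Ioi]

section MulExpSubstitution

variable {s : ℝ}

theorem image_mul_exp_univ (hs : 0 < s) : (fun t => s * exp t) '' univ = Ioi 0 := by
  rw [image_univ, show (fun t => s * exp t) = (s * ·) ∘ exp from rfl, range_comp, range_exp,
    image_mul_left_Ioi hs, mul_zero]

theorem injOn_mul_exp (hs : 0 < s) : InjOn (fun t => s * exp t) univ :=
  fun _ _ _ _ h => exp_injective (mul_left_cancel₀ hs.ne' h)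

theorem hasDerivWithinAt_mul_exp (t : ℝ) :
    HasDerivWithinAt (fun t => s * exp t) (s * exp t) univ t :=
  ((hasDerivAt_exp t).const_mul s).hasDerivWithinAt

theorem integrableOn_Ioi_zero_iff_integrable_mul_exp_smul_comp {E : Type*}
    [NormedAddCommGroup E] [NormedSpace ℝ E] (hs : 0 < s) (g : ℝ → E) :
    IntegrableOn g (Ioi 0) ↔ Integrable fun t => (s * exp t) • g (s * exp t) := by
  rw [← image_mul_exp_univ hs, integrableOn_image_iff_integrableOn_abs_deriv_smul
    MeasurableSet.univ (fun t _ => hasDerivWithinAt_mul_exp t) (injOn_mul_exp hs),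
    integrableOn_univ]
  simp only [abs_of_pos (mul_pos hs (exp_pos _))]

theorem integral_Ioi_zero_eq_integral_mul_exp_smul_comp {E : Type*} [NormedAddCommGroup E]
    [NormedSpace ℝ E] (hs : 0 < s) (g : ℝ → E) :
    ∫ x in Ioi 0, g x = ∫ t, (s * exp t) • g (s * exp t) := by
  rw [← image_mul_exp_univ hs, integral_image_eq_integral_abs_deriv_smul
    MeasurableSet.univ (fun t _ => hasDerivWithinAt_mul_exp t) (injOn_mul_exp hs),
    setIntegral_univ]
  simp only [abs_of_pos (mul_pos hs (exp_pos _))]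

end MulExpSubstitution

theorem integrableOn_exp_neg_sub_div_Ioi {c : ℝ} (hc : 0 ≤ c) :
    IntegrableOn (fun x => exp (-x - c / x)) (Ioi 0) := by
  refine (exp_neg_integrableOn_Ioi 0 one_pos).mono' (by fun_prop) ?_
  filter_upwards [ae_restrict_mem measurableSet_Ioi] with x hx
  rw [norm_of_nonneg (exp_pos _).le, neg_one_mul]
  exact exp_le_exp.2 (by linarith [div_nonneg hc (le_of_lt hx)])

theorem integral_exp_neg_sub_div_Ioi {c : ℝ} (hc : 0 < c) :
    ∫ x in Ioi 0, exp (-x - c / x) = 2 * √c * besselK 1 (2 * √c) := by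
  obtain ⟨s, hs, rfl⟩ : ∃ s > 0, s ^ 2 = c := ⟨√c, sqrt_pos.2 hc, sq_sqrt hc.le⟩
  rw [sqrt_sq hs.le]
  set f : ℝ → ℝ := fun t => exp t * exp (-(2 * s) * cosh t)
  have hsubst : ∀ t, (s * exp t) • exp (-(s * exp t) - s ^ 2 / (s * exp t)) = s * f t := by
    intro t
    have hc' : s ^ 2 / (s * exp t) = s * exp (-t) := by
      rw [exp_neg]
      field_simp
    simp only [hc', smul_eq_mul, mul_assoc, f, cosh_eq]
    congr 3
    ring
  have hf : Integrable f := by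
    have := (integrableOn_Ioi_zero_iff_integrable_mul_exp_smul_comp hs _).1
      (integrableOn_exp_neg_sub_div_Ioi hc.le)
    simp_rw [hsubst] at this
    exact (integrable_const_mul_iff (isUnit_iff_ne_zero.2 hs.ne') f).1 this
  calc ∫ x in Ioi 0, exp (-x - s ^ 2 / x)
      = s * ∫ t in Ioi 0, (f t + f (-t)) := by
        rw [integral_Ioi_zero_eq_integral_mul_exp_smul_comp hs,
          ← integral_eq_integral_Ioi_add_comp_neg hf, ← integral_const_mul]
        simp_rw [hsubst]
    _ = s * ∫ t in Ioi 0, 2 * (exp (-(2 * s) * cosh t) * cosh (1 * t)) := by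
        congr 1
        refine integral_congr_ae (Filter.Eventually.of_forall fun t => ?_)
        simp only [f, cosh_neg, one_mul]
        rw [cosh_eq]
        ring
    _ = 2 * s * besselK 1 (2 * s) := by
        rw [integral_const_mul, besselK]
        ring

theorem integral_one_sub_exp_neg_sub_div_mul_exp_neg_Ioi (a : ℝ) {c : ℝ} (hc : 0 ≤ c) :
    ∫ x in Ioi 0, (1 - exp (-a - c / x)) * exp (-x) =
      1 - exp (-a) * ∫ x in Ioi 0, exp (-x - c / x) := by
  have hsplit : ∀ x,
      (1 - exp (-a - c / x)) * exp (-x) = exp (-x) - exp (-a) * exp (-x - c / x) := by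
    intro x
    rw [sub_mul, one_mul, ← exp_add, ← exp_add]
    congr 2
    ring
  have hexp : IntegrableOn (fun x : ℝ => exp (-x)) (Ioi 0) := by
    simpa using exp_neg_integrableOn_Ioi 0 one_pos
  simp_rw [hsplit]
  rw [integral_sub hexp ((integrableOn_exp_neg_sub_div_Ioi hc).const_mul _),
    integral_exp_neg_Ioi_zero, integral_const_mul]

theorem integral_rpow_natCast_mul_exp_neg_mul_Ioi (n : ℕ) {r : ℝ} (hr : 0 < r) :
    ∫ z in Ioi 0, z ^ (n : ℝ) * exp (-(r * z)) = n.factorial / r ^ ((n : ℝ) + 1) := by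
  have := integral_rpow_mul_exp_neg_mul_Ioi (Nat.cast_add_one_pos n) hr
  rw [add_sub_cancel_right, Gamma_nat_eq_factorial, one_div, inv_rpow hr.le] at this
  rw [this, div_eq_inv_mul]

theorem integrableOn_rpow_natCast_mul_exp_neg_mul_Ioi (n : ℕ) {r : ℝ} (hr : 0 < r) :
    IntegrableOn (fun z => z ^ (n : ℝ) * exp (-(r * z))) (Ioi 0) :=
  .of_integral_ne_zero (by rw [integral_rpow_natCast_mul_exp_neg_mul_Ioi n hr]; positivity)

theorem stmt_14 (K : ℕ) (hK : 2 ≤ K) (ε ρ τ : ℝ) (hε : 0 < ε) (hρ : 0 < ρ) (hτ : 0 < τ) :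
    ∫ z in Set.Ioi (0 : ℝ), ∫ x in Set.Ioi (0 : ℝ),
        (1 - Real.exp (-(ε * x * z + ε / ρ) / (x * τ))) * Real.exp (-x) *
          z ^ ((K : ℝ) - 2) * Real.exp (-z) / (K - 2).factorial =
      1 - 2 * Real.sqrt (ε / (ρ * τ)) * besselK 1 (2 * Real.sqrt (ε / (ρ * τ))) /
        (1 + ε / τ) ^ ((K : ℝ) - 1) := by
  obtain ⟨n, rfl⟩ : ∃ n, K = n + 2 := ⟨K - 2, by omega⟩
  rw [show ((n + 2 : ℕ) : ℝ) - 2 = n by push_cast; ring,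
    show ((n + 2 : ℕ) : ℝ) - 1 = n + 1 by push_cast; ring, Nat.add_sub_cancel]
  set c := ε / (ρ * τ)
  have hc : 0 < c := by positivity
  have hexponent : ∀ z, ∀ x ∈ Ioi (0 : ℝ),
      -(ε * x * z + ε / ρ) / (x * τ) = -(ε / τ * z) - c / x := by
    intro z x hx
    simp only [c]
    field_simp [(mem_Ioi.1 hx).ne']
    ring
  have hinner : ∀ z ∈ Ioi (0 : ℝ),
      ∫ x in Ioi (0 : ℝ), (1 - exp (-(ε * x * z + ε / ρ) / (x * τ))) * exp (-x) *
          z ^ (n : ℝ) * exp (-z) / n.factorial =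
        (z ^ (n : ℝ) * exp (-(1 * z)) - 2 * √c * besselK 1 (2 * √c) *
          (z ^ (n : ℝ) * exp (-((1 + ε / τ) * z)))) / n.factorial := by
    intro z _
    rw [setIntegral_congr_fun measurableSet_Ioi fun x hx => by
        rw [hexponent z x hx, mul_assoc _ (z ^ (n : ℝ)), mul_div_assoc],
      integral_mul_const, integral_one_sub_exp_neg_sub_div_mul_exp_neg_Ioi _ hc.le,
      integral_exp_neg_sub_div_Ioi hc, one_mul, add_mul, one_mul, neg_add, exp_add]
    ring
  rw [setIntegral_congr_fun measurableSet_Ioi hinner, integral_div,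
    integral_sub (integrableOn_rpow_natCast_mul_exp_neg_mul_Ioi n one_pos)
      ((integrableOn_rpow_natCast_mul_exp_neg_mul_Ioi n (by positivity)).const_mul _),
    integral_const_mul, integral_rpow_natCast_mul_exp_neg_mul_Ioi n one_pos,
    integral_rpow_natCast_mul_exp_neg_mul_Ioi n (by positivity), one_rpow]
  field_simp
end
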